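/- Horner enclosure theorem: let [A] be an interval matrix and K ∈ ℕ with K+2 > ‖[A]‖. Then for every A ∈ [A], exp(A) belongs to [H]([A],K) := [H̃]([A],K) + ρ(‖[A]‖,K)·[−E,E], where [H̃]([A],K) = I + [A](I + ([A]/2)(I + ([A]/3)(⋯(I + [A]/K)⋯))) is computed with interval matrix arithmetic. -/

import Mathlib

open Pointwise

attribute [local instance] Matrix.linftyOpNormedRing Matrix.linftyOpNormedAlgebra

/-- The matrix exponential, defined by its power series. -/
noncomputable def expM {n : ℕ} (A : Matrix (Fin n) (Fin n) ℝ) : Matrix (Fin n) (Fin n) ℝ :=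
  ∑' k : ℕ, (k.factorial : ℝ)⁻¹ • A ^ k

/-- The truncation error bound `ρ(α,K) = α^(K+1) / ((K+1)!·(1 − α/(K+2)))`. -/
noncomputable def rho (α : ℝ) (K : ℕ) : ℝ :=
  α ^ (K + 1) / ((K + 1).factorial * (1 - α / (K + 2)))

/-- An interval matrix, given entrywise by subsets (intervals) of `ℝ`. -/
abbrev IMat (n : ℕ) := Matrix (Fin n) (Fin n) (Set ℝ)

/-- The interval matrix `[A̲, Ā]` with entries `[a̲_{ij}, ā_{ij}]`. -/
def ofBounds {n : ℕ} (lo hi : Matrix (Fin n) (Fin n) ℝ) : IMat n :=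
  fun i j => Set.Icc (lo i j) (hi i j)

/-- Membership of a real matrix in an interval matrix (entrywise membership). -/
def memI {n : ℕ} (M : Matrix (Fin n) (Fin n) ℝ) (A : IMat n) : Prop :=
  ∀ i j, M i j ∈ A i j

/-- Entrywise interval matrix addition (setwise interval addition). -/
def iadd {n : ℕ} (A B : IMat n) : IMat n := fun i j => A i j + B i j

/-- Scalar multiple of an interval matrix (setwise). -/
def ismul {n : ℕ} (c : ℝ) (A : IMat n) : IMat n := fun i j => c • A i j

/-- Interval matrix product: `([A][B])_{ij} = ∑ₖ [a_{ik}]·[b_{kj}]`, where interval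
products are setwise and sums are Minkowski sums (interval arithmetic). -/
def imul {n : ℕ} (A B : IMat n) : IMat n :=
  fun i j => ∑ k : Fin n, Set.image2 (· * ·) (A i k) (B k j)

/-- The degenerate (point) interval identity matrix. -/
def iId (n : ℕ) : IMat n := fun i j => {(1 : Matrix (Fin n) (Fin n) ℝ) i j}

/-- Interval Horner scheme: `ihornerP [A] K K` is the interval evaluation of
`I + [A](I + ([A]/2)(I + ([A]/3)(⋯(I + [A]/K)⋯))))`, built from the recursion
`H_{K+1} = I`, `H_j = I + ([A]/j)·H_{j+1}` (here `ihornerP [A] K m = H_{K+1-m}`). -/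
def ihornerP {n : ℕ} (A : IMat n) (K : ℕ) : ℕ → IMat n
  | 0 => iId n
  | m + 1 => iadd (iId n) (ismul ((K - m : ℕ) : ℝ)⁻¹ (imul A (ihornerP A K m)))

/-- The norm of an interval matrix: `‖[A]‖ = sup{‖A‖_∞ : A ∈ [A]}`. -/
noncomputable def intervalNorm {n : ℕ} (lo hi : Matrix (Fin n) (Fin n) ℝ) : ℝ :=
  sSup ((fun M => ‖M‖) '' {A : Matrix (Fin n) (Fin n) ℝ | ∀ i j, A i j ∈ Set.Icc (lo i j) (hi i j)})

/-!
The interval operations are inclusion isotone, so running the Horner recursion on a point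
`A ∈ [A]` produces a real matrix inside `[H̃]([A],K)`; on points the recursion evaluates exactly
to the Taylor polynomial `∑_{k ≤ K} A^k / k!`. The remainder `∑_{k > K} A^k / k!` is dominated
termwise by a geometric series of ratio `‖A‖/(K+2) ≤ ‖[A]‖/(K+2) < 1`, whose sum is
`ρ(‖[A]‖,K)`, and every entry of a matrix is bounded by its `∞`-operator norm.
-/

open Finset
open scoped Nat

section Horner

variable {𝔸 : Type*} [Ring 𝔸] [Algebra ℝ 𝔸]

noncomputable def expHorner (x : 𝔸) (K : ℕ) : ℕ → 𝔸
  | 0 => 1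
  | m + 1 => 1 + ((K - m : ℕ) : ℝ)⁻¹ • (x * expHorner x K m)

theorem factorial_inv_smul_expHorner (x : 𝔸) {K : ℕ} :
    ∀ {m j : ℕ}, m + j = K →
      (j ! : ℝ)⁻¹ • expHorner x K m = ∑ k ∈ range (m + 1), ((j + k)! : ℝ)⁻¹ • x ^ k
  | 0, j, _ => by simp [expHorner]
  | m + 1, j, hK => by
    have hKm : K - m = j + 1 := by omega
    calc (j ! : ℝ)⁻¹ • expHorner x K (m + 1)
        = (j ! : ℝ)⁻¹ • 1 + x * (((j + 1)! : ℝ)⁻¹ • expHorner x K m) := by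
          rw [expHorner, hKm, smul_add, smul_smul, mul_smul_comm, Nat.factorial_succ, Nat.cast_mul,
            mul_inv, mul_comm]
      _ = ∑ k ∈ range (m + 2), ((j + k)! : ℝ)⁻¹ • x ^ k := by
          rw [factorial_inv_smul_expHorner x (by omega : m + (j + 1) = K), mul_sum,
            sum_range_succ' _ (m + 1), add_comm]
          simp only [mul_smul_comm, ← pow_succ', add_assoc, add_comm 1, add_zero, pow_zero]

theorem expHorner_self (x : 𝔸) (K : ℕ) :
    expHorner x K K = ∑ k ∈ range (K + 1), (k ! : ℝ)⁻¹ • x ^ k := by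
  simpa using factorial_inv_smul_expHorner x (add_zero K)

end Horner

section ExpTail

variable {𝔸 : Type*} [NormedRing 𝔸] [NormedAlgebra ℝ 𝔸] {x : 𝔸} {α : ℝ}

theorem norm_factorial_inv_smul_pow_le (hx : ‖x‖ ≤ α) (K i : ℕ) :
    ‖((i + (K + 1))! : ℝ)⁻¹ • x ^ (i + (K + 1))‖
      ≤ α ^ (K + 1) / (K + 1)! * (α / (K + 2)) ^ i := by
  have hα : 0 ≤ α := (norm_nonneg x).trans hx
  have hfact : ((K + 1)! : ℝ) * ((K : ℝ) + 2) ^ i ≤ (i + (K + 1))! := by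
    rw [add_comm i]
    exact_mod_cast Nat.factorial_mul_pow_le_factorial
  calc ‖((i + (K + 1))! : ℝ)⁻¹ • x ^ (i + (K + 1))‖
      ≤ α ^ (i + (K + 1)) / (i + (K + 1))! := by
        rw [norm_smul, norm_inv, Real.norm_natCast, inv_mul_eq_div]
        gcongr
        exact (norm_pow_le' x (by omega)).trans (pow_le_pow_left₀ (norm_nonneg x) hx _)
    _ ≤ α ^ (i + (K + 1)) / ((K + 1)! * ((K : ℝ) + 2) ^ i) := by gcongr
    _ = α ^ (K + 1) / (K + 1)! * (α / (K + 2)) ^ i := by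
        rw [div_pow, pow_add]
        field_simp

theorem norm_tsum_sub_sum_range_le_rho [CompleteSpace 𝔸] (hx : ‖x‖ ≤ α) {K : ℕ}
    (hαK : α < K + 2) :
    ‖(∑' k, (k ! : ℝ)⁻¹ • x ^ k) - ∑ k ∈ range (K + 1), (k ! : ℝ)⁻¹ • x ^ k‖
      ≤ rho α K := by
  have hα : 0 ≤ α := (norm_nonneg x).trans hx
  have hq : α / (K + 2) < 1 := (div_lt_one (by positivity)).2 hαK
  have htail : (∑' k, (k ! : ℝ)⁻¹ • x ^ k) - ∑ k ∈ range (K + 1), (k ! : ℝ)⁻¹ • x ^ k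
      = ∑' i, ((i + (K + 1))! : ℝ)⁻¹ • x ^ (i + (K + 1)) := by
    rw [← (NormedSpace.expSeries_summable' (𝕂 := ℝ) x).sum_add_tsum_nat_add (K + 1),
      add_sub_cancel_left]
  have hgeom := ((hasSum_geometric_of_lt_one (by positivity) hq).mul_left
    (α ^ (K + 1) / (K + 1)!))
  rw [htail]
  refine (tsum_of_norm_bounded hgeom (norm_factorial_inv_smul_pow_le hx K)).trans_eq ?_
  have : 1 - α / (K + 2) ≠ 0 := by linarith
  rw [rho]
  field_simp

end ExpTail

section MatrixNorm

attribute [local instance] Matrix.linftyOpSeminormedAddCommGroup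

theorem Matrix.norm_entry_le_linfty_opNorm {m n α : Type*} [Fintype m] [Fintype n]
    [SeminormedAddCommGroup α] (A : Matrix m n α) (i : m) (j : n) : ‖A i j‖ ≤ ‖A‖ :=
  (PiLp.norm_apply_le (WithLp.toLp 1 (A i)) j).trans
    (norm_le_pi_norm (fun i => WithLp.toLp 1 (A i)) i)

end MatrixNorm

theorem norm_le_intervalNorm {n : ℕ} {Alo Ahi A : Matrix (Fin n) (Fin n) ℝ}
    (hA : ∀ i j, A i j ∈ Set.Icc (Alo i j) (Ahi i j)) : ‖A‖ ≤ intervalNorm Alo Ahi := by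
  -- stated for `Fin n → Fin n → ℝ`, since `Set.mem_univ_pi` does not see through `Matrix`
  have hbox : IsCompact {f : Fin n → Fin n → ℝ | ∀ i j, f i j ∈ Set.Icc (Alo i j) (Ahi i j)} := by
    simpa only [← Set.mem_univ_pi, Set.ofPred_mem_eq] using
      isCompact_univ_pi fun i => isCompact_univ_pi fun j => isCompact_Icc
  exact le_csSup (IsCompact.bddAbove_image (f := fun M : Matrix (Fin n) (Fin n) ℝ => ‖M‖) hbox
    continuous_norm.continuousOn) ⟨A, hA, rfl⟩

section IntervalArithmetic

variable {n : ℕ} {A B : Matrix (Fin n) (Fin n) ℝ} {IA IB : IMat n}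

theorem memI_one_iId : memI (1 : Matrix (Fin n) (Fin n) ℝ) (iId n) :=
  fun _ _ => rfl

theorem memI_iadd (hA : memI A IA) (hB : memI B IB) : memI (A + B) (iadd IA IB) :=
  fun i j => Set.add_mem_add (hA i j) (hB i j)

theorem memI_ismul (c : ℝ) (hA : memI A IA) : memI (c • A) (ismul c IA) :=
  fun i j => Set.smul_mem_smul_set (hA i j)

theorem memI_imul (hA : memI A IA) (hB : memI B IB) : memI (A * B) (imul IA IB) :=
  fun i j => Set.finsetSum_mem_finsetSum _ _ _
    fun k _ => Set.mem_image2_of_mem (hA i k) (hB k j)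

theorem memI_expHorner (hA : memI A IA) (K : ℕ) :
    ∀ m, memI (expHorner A K m) (ihornerP IA K m)
  | 0 => memI_one_iId
  | m + 1 => memI_iadd memI_one_iId (memI_ismul _ (memI_imul hA (memI_expHorner hA K m)))

theorem mem_smul_Icc_neg_one_one {x r : ℝ} (hx : |x| ≤ r) : x ∈ r • Set.Icc (-1 : ℝ) 1 := by
  rcases (abs_nonneg x |>.trans hx).eq_or_lt with hr | hr
  · rw [← hr, Set.zero_smul_set (Set.nonempty_Icc.2 (by norm_num))]
    exact abs_nonpos_iff.1 (hr ▸ hx)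
  · rw [LinearOrderedField.smul_Icc hr, mul_neg_one, mul_one]
    exact abs_le.1 hx

theorem memI_iadd_smul_Icc_of_norm_sub_le {M : Matrix (Fin n) (Fin n) ℝ} {r : ℝ} (hA : memI A IA)
    (hMA : ‖M - A‖ ≤ r) : memI M (iadd IA fun _ _ => r • Set.Icc (-1 : ℝ) 1) := by
  intro i j
  rw [← add_sub_cancel A M]
  refine Set.add_mem_add (hA i j) (mem_smul_Icc_neg_one_one ?_)
  rw [← Real.norm_eq_abs]
  exact (Matrix.norm_entry_le_linfty_opNorm (M - A) i j).trans hMA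

end IntervalArithmetic

theorem horner_interval_enclosure_general (n K : ℕ) (Alo Ahi : Matrix (Fin n) (Fin n) ℝ)
    (hK : intervalNorm Alo Ahi < (K : ℝ) + 2) :
    ∀ A : Matrix (Fin n) (Fin n) ℝ, (∀ i j, A i j ∈ Set.Icc (Alo i j) (Ahi i j)) →
      memI (expM A)
        (iadd (ihornerP (ofBounds Alo Ahi) K K)
          (fun _ _ => rho (intervalNorm Alo Ahi) K • Set.Icc (-1 : ℝ) 1)) := by
  intro A hA
  refine memI_iadd_smul_Icc_of_norm_sub_le (memI_expHorner hA K K) ?_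
  rw [expHorner_self]
  exact norm_tsum_sub_sum_range_le_rho (norm_le_intervalNorm hA) hK

/-- Horner enclosure theorem: if `K + 2 > ‖[A]‖` then for every `A ∈ [A]`, `exp A`
belongs to `[H]([A],K) = [H̃]([A],K) + ρ(‖[A]‖,K)·[−E,E]`, where `[H̃]([A],K)` is the
interval Horner evaluation `I + [A](I + ([A]/2)(I + ([A]/3)(⋯(I + [A]/K)⋯))))`. -/
theorem horner_interval_enclosure (n K : ℕ) (Alo Ahi : Matrix (Fin n) (Fin n) ℝ)
    (hA : ∀ i j, Alo i j ≤ Ahi i j) (hK1 : 1 ≤ K)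
    (hK : intervalNorm Alo Ahi < (K : ℝ) + 2) :
    ∀ A : Matrix (Fin n) (Fin n) ℝ, (∀ i j, A i j ∈ Set.Icc (Alo i j) (Ahi i j)) →
      memI (expM A)
        (iadd (ihornerP (ofBounds Alo Ahi) K K)
          (fun _ _ => rho (intervalNorm Alo Ahi) K • Set.Icc (-1 : ℝ) 1)) :=
  horner_interval_enclosure_general n K Alo Ahi hK
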